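/- (Color ignorance) Fix b₁, b₂ ∈ [0,1], 1 ≤ m ≤ n, and 𝔦, 𝔧, 𝔨, 𝔩 ∈ {0,1}^m. For all i, j ∈ {0,1}ⁿ whose first m coordinates equal 𝔦 and 𝔧 respectively, one has Σ Lⁿ(i,j;k,l) = Lᵐ(𝔦,𝔧;𝔨,𝔩), where the sum ranges over all k, l ∈ {0,1}ⁿ whose first m coordinates equal 𝔨 and 𝔩 respectively. -/

import Mathlib

/-- Exponents of the indeterminates `b₁` (resp. `b₂`) appearing in a formal weight:
`e` for exponent zero (factor `1`), `pl` for the factor `bᵢ`, `mi` for the factor `1 - bᵢ`. -/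
inductive Eps : Type
  | e : Eps
  | pl : Eps
  | mi : Eps
deriving DecidableEq

instance : Fintype Eps :=
  ⟨{.e, .pl, .mi}, by intro x; cases x <;> simp⟩

/-- The 10-element set of formal weights: `none` represents `0`, and `some (ε₁, ε₂)`
represents the monomial `f₁(ε₁) f₂(ε₂)`. -/
abbrev Wt : Type := Option (Eps × Eps)

/-- The join operation on exponents: `a ∨ a = a`, `e ∨ a = a ∨ e = a`, and the
clash `{+, −}` gives `none` (i.e. the factor `0`). -/
def Eps.vee : Eps → Eps → Option Eps
  | .e, a => some a
  | a, .e => some a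
  | .pl, .pl => some .pl
  | .mi, .mi => some .mi
  | .pl, .mi => none
  | .mi, .pl => none

/-- The Boolean-type product `*` on the formal weight set `Wt`. -/
def wmul : Wt → Wt → Wt
  | none, _ => none
  | _, none => none
  | some (a₁, a₂), some (c₁, c₂) =>
    match a₁.vee c₁, a₂.vee c₂ with
    | some x, some y => some (x, y)
    | _, _ => none

/-- Evaluation of an exponent of `b₁`: `f₁(e) = 1`, `f₁(+) = b₁`, `f₁(−) = 1 - b₁`. -/
def f1 (b1 : ℝ) : Eps → ℝ
  | .e => 1
  | .pl => b1
  | .mi => 1 - b1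

/-- Evaluation of an exponent of `b₂`: `f₂(e) = 1`, `f₂(+) = b₂`, `f₂(−) = 1 - b₂`. -/
def f2 (b2 : ℝ) : Eps → ℝ
  | .e => 1
  | .pl => b2
  | .mi => 1 - b2

/-- The evaluation map `ev_{b₁,b₂} : W → ℝ`. -/
def ev (b1 b2 : ℝ) : Wt → ℝ
  | none => 0
  | some (x, y) => f1 b1 x * f2 b2 y

/-- The formal one-colored vertex weights `L̂¹(i, j; k, l) ∈ W`
(`i` = bottom input, `j` = left input, `k` = top output, `l` = right output,
with `true` standing for `1`). -/
def Lhat1 : Bool → Bool → Bool → Bool → Wt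
  | true, false, true, false => some (.e, .e)
  | false, true, false, true => some (.e, .e)
  | false, false, false, false => some (.e, .pl)
  | false, false, true, true => some (.e, .mi)
  | true, true, true, true => some (.pl, .e)
  | true, true, false, false => some (.mi, .e)
  | _, _, _, _ => none

/-- The `r`-fold projection `s_r(x) = (x₁ + ⋯ + x_r) mod 2` of a vector `x ∈ {0,1}ⁿ`
(here `r : Fin n` stands for the `1`-indexed level `r + 1`). -/
def sproj {n : ℕ} (x : Fin n → Bool) (r : Fin n) : Bool :=
  decide ((∑ t ∈ Finset.univ.filter (fun t : Fin n => t ≤ r),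
    (if x t then (1 : ℕ) else 0)) % 2 = 1)

/-- The formal `n`-colored vertex weight
`L̂ⁿ(i, j; k, l) = ∏*_{r=1}^n L̂¹(s_r(i), s_r(j); s_r(k), s_r(l)) ∈ W`,
where the product is taken with respect to the Boolean-type product `*`. -/
def Lhatn {n : ℕ} (i j k l : Fin n → Bool) : Wt :=
  (List.ofFn (fun r : Fin n =>
    Lhat1 (sproj i r) (sproj j r) (sproj k r) (sproj l r))).foldr wmul (some (.e, .e))

/-- The real `n`-colored vertex weight `Lⁿ(i, j; k, l) = ev_{b₁,b₂}(L̂ⁿ(i, j; k, l))`. -/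
def Ln (b1 b2 : ℝ) {n : ℕ} (i j k l : Fin n → Bool) : ℝ :=
  ev b1 b2 (Lhatn i j k l)

/-!
Induct on `n`, peeling off the last color. The first `n` factors of `L̂ⁿ⁺¹(i, j; k, l)` only see
the first `n` coordinates, and the last factor sees `k`, `l` only through
`sₙ₊₁(k) = sₙ(k) xor kₙ₊₁` (similarly for `l`), so summing over `kₙ₊₁, lₙ₊₁` is summing over all
outputs of `L̂¹` with fixed inputs. The evaluation is not multiplicative, but against any prefix
`P` the two nonzero outputs `(e,+)`, `(e,−)` (or `(+,e)`, `(−,e)`) still split `ev P`: either `P`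
has exponent `e` in that slot and we get `b + (1 - b) = 1`, or the idempotent product keeps one
term as `P` and kills the other.
-/

instance : Std.Associative wmul := ⟨by decide⟩

lemma one_wmul : ∀ u : Wt, wmul (some (.e, .e)) u = u := by decide

lemma wmul_one : ∀ u : Wt, wmul u (some (.e, .e)) = u := by decide

lemma wmul_none : ∀ u : Wt, wmul u none = none := by decide

lemma foldr_wmul (L : List Wt) (u : Wt) :
    L.foldr wmul u = wmul (L.foldr wmul (some (.e, .e))) u := by
  conv_lhs => rw [← one_wmul u]
  exact List.foldr_assoc

section ev

variable (b1 b2 : ℝ) (P : Wt)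

lemma ev_none : ev b1 b2 none = 0 := rfl

lemma ev_wmul_e_pl_add_ev_wmul_e_mi :
    ev b1 b2 (wmul P (some (.e, .pl))) + ev b1 b2 (wmul P (some (.e, .mi))) = ev b1 b2 P := by
  rcases P with _ | ⟨x, y⟩
  · simp [wmul, ev]
  · cases x <;> cases y <;> simp [wmul, ev, Eps.vee, f1, f2] <;> ring

lemma ev_wmul_pl_e_add_ev_wmul_mi_e :
    ev b1 b2 (wmul P (some (.pl, .e))) + ev b1 b2 (wmul P (some (.mi, .e))) = ev b1 b2 P := by
  rcases P with _ | ⟨x, y⟩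
  · simp [wmul, ev]
  · cases x <;> cases y <;> simp [wmul, ev, Eps.vee, f1, f2] <;> ring

lemma sum_ev_wmul_Lhat1 (a b : Bool) :
    ∑ c : Bool, ∑ d : Bool, ev b1 b2 (wmul P (Lhat1 a b c d)) = ev b1 b2 P := by
  cases a <;> cases b <;>
    simp only [Fintype.sum_bool, Lhat1, wmul_none, wmul_one, ev_none, add_zero, zero_add]
  · rw [add_comm]
    exact ev_wmul_e_pl_add_ev_wmul_e_mi b1 b2 P
  · exact ev_wmul_pl_e_add_ev_wmul_mi_e b1 b2 P

end ev

lemma sproj_castSucc {n : ℕ} (x : Fin (n + 1) → Bool) (r : Fin n) :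
    sproj x r.castSucc = sproj (Fin.init x) r := by
  simp only [sproj, Finset.sum_filter, Fin.sum_univ_castSucc, Fin.castSucc_le_castSucc_iff,
    (Fin.castSucc_lt_last r).not_ge, ↓reduceIte, add_zero]
  rfl

lemma sproj_last {n : ℕ} (x : Fin (n + 1) → Bool) :
    sproj x (Fin.last n) =
      (decide ((∑ t : Fin n, if Fin.init x t then 1 else 0) % 2 = 1) ^^ x (Fin.last n)) := by
  rw [sproj, Finset.filter_true_of_mem fun t _ => Fin.le_last t, Fin.sum_univ_castSucc]
  unfold Fin.init
  cases x (Fin.last n) <;> simp [Nat.succ_mod_two_eq_one_iff, ← decide_not]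

lemma Lhatn_succ {n : ℕ} (i j k l : Fin (n + 1) → Bool) :
    Lhatn i j k l =
      wmul (Lhatn (Fin.init i) (Fin.init j) (Fin.init k) (Fin.init l))
        (Lhat1 (sproj i (Fin.last n)) (sproj j (Fin.last n)) (sproj k (Fin.last n))
          (sproj l (Fin.last n))) := by
  rw [Lhatn, List.ofFn_succ_last, List.foldr_append, List.foldr_cons, List.foldr_nil, wmul_one,
    foldr_wmul]
  simp only [sproj_castSucc, Lhatn]

lemma Bool.sum_xor {M : Type*} [AddCommMonoid M] (s : Bool) (f : Bool → M) :
    ∑ c, f (s ^^ c) = ∑ c, f c :=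
  Fintype.sum_bijective (s ^^ ·) (Function.Involutive.bijective fun c => by simp) _ _
    fun _ => rfl

lemma Bool.sum_sum_xor {M : Type*} [AddCommMonoid M] (s t : Bool) (f : Bool → Bool → M) :
    ∑ c, ∑ d, f (s ^^ c) (t ^^ d) = ∑ c, ∑ d, f c d := by
  rw [Bool.sum_xor s fun c => ∑ d, f c (t ^^ d)]
  exact Finset.sum_congr rfl fun c _ => Bool.sum_xor t (f c)

lemma sum_Ln_snoc_snoc (b1 b2 : ℝ) {n : ℕ} (i j : Fin (n + 1) → Bool) (k l : Fin n → Bool) :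
    ∑ c, ∑ d, Ln b1 b2 i j (Fin.snoc k c) (Fin.snoc l d) =
      Ln b1 b2 (Fin.init i) (Fin.init j) k l := by
  simp only [Ln, Lhatn_succ i j, Fin.init_snoc, sproj_last (Fin.snoc _ _), Fin.snoc_last]
  exact (Bool.sum_sum_xor _ _ fun c d => ev b1 b2 (wmul _ (Lhat1 _ _ c d))).trans
    (sum_ev_wmul_Lhat1 b1 b2 _ _ _)

section extensions

variable {α M : Type*} [Fintype α] [DecidableEq α] [AddCommMonoid M] {m n : ℕ}

def extensions (h : m ≤ n) (g : Fin m → α) : Finset (Fin n → α) :=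
  Finset.univ.filter fun k => ∀ r, k (Fin.castLE h r) = g r

lemma extensions_refl (h : m ≤ m) (g : Fin m → α) : extensions h g = {g} := by
  ext k
  simp [extensions, funext_iff]

lemma sum_extensions_succ (hmn : m ≤ n) (h : m ≤ n + 1) (g : Fin m → α)
    (F : (Fin (n + 1) → α) → M) :
    ∑ k ∈ extensions h g, F k = ∑ k ∈ extensions hmn g, ∑ c, F (Fin.snoc k c) := by
  have snoc_castLE (k : Fin n → α) (c : α) (r : Fin m) :
      (Fin.snoc k c : Fin (n + 1) → α) (Fin.castLE h r) = k (Fin.castLE hmn r) :=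
    Fin.snoc_castSucc (α := fun _ => α) c k (Fin.castLE hmn r)
  simp only [extensions, Finset.sum_filter]
  rw [← (Fin.snocEquiv fun _ => α).sum_comp, Fintype.sum_prod_type, Finset.sum_comm]
  simp only [Fin.snocEquiv_apply, snoc_castLE, Finset.sum_ite_irrel, Finset.sum_const_zero]
  rfl

end extensions

theorem Ln_color_ignorance_general
    (b1 b2 : ℝ)
    (m n : ℕ) (hmn : m ≤ n)
    (fi fj fk fl : Fin m → Bool)
    (i j : Fin n → Bool)
    (hi : ∀ r : Fin m, i (Fin.castLE hmn r) = fi r)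
    (hj : ∀ r : Fin m, j (Fin.castLE hmn r) = fj r) :
    ∑ k ∈ Finset.univ.filter (fun k : Fin n → Bool => ∀ r : Fin m, k (Fin.castLE hmn r) = fk r),
      ∑ l ∈ Finset.univ.filter (fun l : Fin n → Bool => ∀ r : Fin m, l (Fin.castLE hmn r) = fl r),
        Ln b1 b2 i j k l = Ln b1 b2 fi fj fk fl := by
  show ∑ k ∈ extensions hmn fk, ∑ l ∈ extensions hmn fl, Ln b1 b2 i j k l = _
  induction n, hmn using Nat.le_induction with
  | base =>
    obtain rfl : i = fi := funext hi
    obtain rfl : j = fj := funext hj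
    simp [extensions_refl]
  | succ n hn IH =>
    calc _ = ∑ k ∈ extensions hn fk, ∑ l ∈ extensions hn fl, ∑ c, ∑ d,
          Ln b1 b2 i j (Fin.snoc k c) (Fin.snoc l d) := by
          simp only [sum_extensions_succ hn]
          exact Finset.sum_congr rfl fun k _ => Finset.sum_comm
      _ = _ := by
          simp only [sum_Ln_snoc_snoc]
          exact IH _ _ hi hj

/-- Color ignorance: for `1 ≤ m ≤ n`, summing `Lⁿ(i, j; k, l)` over all outputs
`k, l ∈ {0,1}ⁿ` whose first `m` coordinates agree with prescribed `𝔨, 𝔩 ∈ {0,1}ᵐ`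
recovers `Lᵐ(𝔦, 𝔧; 𝔨, 𝔩)`, whenever the first `m` coordinates of `i, j` equal `𝔦, 𝔧`. -/
theorem Ln_color_ignorance
    (b1 b2 : ℝ) (hb1 : b1 ∈ Set.Icc (0 : ℝ) 1) (hb2 : b2 ∈ Set.Icc (0 : ℝ) 1)
    (m n : ℕ) (hm : 1 ≤ m) (hmn : m ≤ n)
    (fi fj fk fl : Fin m → Bool)
    (i j : Fin n → Bool)
    (hi : ∀ r : Fin m, i (Fin.castLE hmn r) = fi r)
    (hj : ∀ r : Fin m, j (Fin.castLE hmn r) = fj r) :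
    ∑ k ∈ Finset.univ.filter (fun k : Fin n → Bool => ∀ r : Fin m, k (Fin.castLE hmn r) = fk r),
      ∑ l ∈ Finset.univ.filter (fun l : Fin n → Bool => ∀ r : Fin m, l (Fin.castLE hmn r) = fl r),
        Ln b1 b2 i j k l = Ln b1 b2 fi fj fk fl :=
  Ln_color_ignorance_general b1 b2 m n hmn fi fj fk fl i j hi hj
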